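/- arXiv:2303.17792 — 2 statements merged into one kernel-verified Lean document; each statement's English description precedes it below -/
import Mathlib

section
/- Let P be a finite point set in general position, γ a proper coloring of D(P), and P' ⊆ P a subset that is separable with respect to γ and such that the segments with endpoints in P' receive exactly |P'| distinct colors under γ. Then the number of colors used by γ on D(P) is at least χ(D(P ∖ P')) + |P'|. -/
open scoped Classical

/-- The closed segment associated to an unordered pair of points. -/
noncomputable def seg : Sym2 (ℝ × ℝ) → Set (ℝ × ℝ) :=
  Sym2.lift ⟨fun p q => segment ℝ p q, fun p q => segment_symm ℝ p q⟩

lemma seg_nonempty (s : Sym2 (ℝ × ℝ)) : (seg s).Nonempty := by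
  induction s using Sym2.ind with
  | _ p q => exact ⟨p, by simp [seg, left_mem_segment]⟩

/-- A point set is in general position if no three (distinct) of its points are collinear. -/
def GenPos (P : Set (ℝ × ℝ)) : Prop :=
  ∀ a ∈ P, ∀ b ∈ P, ∀ c ∈ P, a ≠ b → a ≠ c → b ≠ c →
    ¬ Collinear ℝ ({a, b, c} : Set (ℝ × ℝ))

/-- A point set is in convex position if every point is a vertex of the convex hull. -/
def ConvexPos (P : Set (ℝ × ℝ)) : Prop :=
  ∀ p ∈ P, p ∉ convexHull ℝ (P \ {p})

/-- Vertices of the disjointness graph: unordered pairs of distinct points of `P`. -/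
def SegOn (P : Set (ℝ × ℝ)) : Type :=
  {s : Sym2 (ℝ × ℝ) // (∀ p ∈ s, p ∈ P) ∧ ¬ s.IsDiag}

/-- The disjointness graph of segments of `P`: segments adjacent iff disjoint. -/
noncomputable def DisjGraph (P : Set (ℝ × ℝ)) : SimpleGraph (SegOn P) where
  Adj a b := seg a.1 ∩ seg b.1 = ∅
  symm := ⟨by intro a b h; rwa [Set.inter_comm]⟩
  loopless := ⟨by
    intro a h
    rw [Set.inter_self] at h
    exact (seg_nonempty a.1).ne_empty h⟩

/-- Two (unordered pairs of points seen as) segments cross if they intersect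
but share no endpoint. -/
def Crosses (s t : Sym2 (ℝ × ℝ)) : Prop :=
  (seg s ∩ seg t).Nonempty ∧ ∀ p, p ∈ s → p ∉ t

/-- A colour class is a star if no two of its segments cross. -/
def IsStarClass {P : Set (ℝ × ℝ)} {α : Type} (γ : (DisjGraph P).Coloring α) (c : α) : Prop :=
  ∀ s t : SegOn P, γ s = c → γ t = c → ¬ Crosses s.1 t.1

/-- `v` is an apex of the colour class `c`: every segment of the class is incident with `v`. -/
def IsApex {P : Set (ℝ × ℝ)} {α : Type} (γ : (DisjGraph P).Coloring α) (c : α) (v : ℝ × ℝ) : Prop :=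
  ∀ s : SegOn P, γ s = c → v ∈ s.1


/-- `Q` is separable with respect to the coloring `γ`: no segment avoiding `Q` that
crosses some segment within `Q` gets a colour appearing within `Q`. -/
def SeparableWrt {P : Set (ℝ × ℝ)} {α : Type} (γ : (DisjGraph P).Coloring α)
    (Q : Set (ℝ × ℝ)) : Prop :=
  ∀ s : SegOn P, (∀ p ∈ s.1, p ∉ Q) →
    (∃ t : SegOn P, (∀ p ∈ t.1, p ∈ Q) ∧ Crosses s.1 t.1) →
    ∀ t : SegOn P, (∀ p ∈ t.1, p ∈ Q) → γ s ≠ γ t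

lemma segOn_finite (P : Finset (ℝ × ℝ)) : Finite (SegOn (↑P : Set (ℝ × ℝ))) := by
  have h : {s : Sym2 (ℝ × ℝ) |
      (∀ p ∈ s, p ∈ (↑P : Set (ℝ × ℝ))) ∧ ¬ s.IsDiag}.Finite := by
    apply Set.Finite.subset
      (Set.finite_range (Sym2.map (Subtype.val : {x // x ∈ P} → ℝ × ℝ)))
    rintro s ⟨hs, -⟩
    induction s using Sym2.ind with
    | _ a b =>
      exact ⟨s(⟨a, by simpa using hs a (by simp)⟩, ⟨b, by simpa using hs b (by simp)⟩),
        by simp⟩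
  exact h.to_subtype

theorem stmt5 (P P' : Finset (ℝ × ℝ)) (hsub : P' ⊆ P) (hgp : GenPos ↑P)
    {α : Type} (γ : (DisjGraph ↑P).Coloring α)
    (hsep : SeparableWrt γ ↑P')
    (hcol : Set.ncard {c : α | ∃ s : SegOn ↑P, (∀ p ∈ s.1, p ∈ P') ∧ γ s = c}
      = P'.card) :
    (DisjGraph ↑(P \ P')).chromaticNumber + (P'.card : ℕ∞)
      ≤ (Set.ncard (Set.range fun s => γ s) : ℕ∞) := by
  classical
  haveI : Finite (SegOn (↑P : Set (ℝ × ℝ))) := segOn_finite P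
  set A : Set α := {c : α | ∃ s : SegOn (↑P : Set (ℝ × ℝ)),
    (∀ p ∈ s.1, p ∈ P') ∧ γ s = c} with hA
  set R : Set α := Set.range fun s => γ s with hR
  have hAR : A ⊆ R := by rintro c ⟨s, -, rfl⟩; exact ⟨s, rfl⟩
  have hRfin : R.Finite := Set.finite_range _
  have hAfin : A.Finite := hRfin.subset hAR
  -- embedding of segments on P \ P' into segments on P
  have hPP : ((P \ P' : Finset (ℝ × ℝ)) : Set (ℝ × ℝ)) ⊆ (↑P : Set (ℝ × ℝ)) := by
    intro x hx
    simp only [Finset.coe_sdiff, Set.mem_diff] at hx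
    exact hx.1
  let emb : SegOn (↑(P \ P') : Set (ℝ × ℝ)) → SegOn (↑P : Set (ℝ × ℝ)) :=
    fun s => ⟨s.1, ⟨fun p hp => hPP (s.2.1 p hp), s.2.2⟩⟩
  have hmemP' : ∀ (s : SegOn (↑(P \ P') : Set (ℝ × ℝ))), ∀ p ∈ s.1, p ∉ (↑P' : Set (ℝ × ℝ)) := by
    intro s p hp
    have := s.2.1 p hp
    simp only [Finset.coe_sdiff, Set.mem_diff] at this
    exact this.2
  have hnotA : ∀ s : SegOn (↑(P \ P') : Set (ℝ × ℝ)), γ (emb s) ∉ A := by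
    rintro s ⟨t, htP', hEq⟩
    by_cases hdisj : seg s.1 ∩ seg t.1 = ∅
    · have hadj : (DisjGraph (↑P : Set (ℝ × ℝ))).Adj (emb s) t := hdisj
      exact γ.valid hadj hEq.symm
    · have hcr : Crosses s.1 t.1 := by
        refine ⟨Set.nonempty_iff_ne_empty.2 hdisj, ?_⟩
        intro p hp hpt
        exact hmemP' s p hp (htP' p hpt)
      exact hsep (emb s) (hmemP' s) ⟨t, htP', hcr⟩ t htP' hEq.symm
  -- a coloring of the small graph with colors in R \ A
  let col : (DisjGraph (↑(P \ P') : Set (ℝ × ℝ))).Coloring ↥(R \ A) :=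
    SimpleGraph.Coloring.mk
      (fun s => ⟨γ (emb s), ⟨⟨emb s, rfl⟩, hnotA s⟩⟩)
      (by
        intro a b hadj hEq
        have hadj' : (DisjGraph (↑P : Set (ℝ × ℝ))).Adj (emb a) (emb b) := hadj
        exact γ.valid hadj' (congrArg Subtype.val hEq))
  haveI : Fintype ↥(R \ A) := (Set.Finite.diff hRfin : (R \ A).Finite).fintype
  have hchi : (DisjGraph (↑(P \ P') : Set (ℝ × ℝ))).chromaticNumber
      ≤ (Fintype.card ↥(R \ A) : ℕ∞) := col.colorable.chromaticNumber_le
  have hcard : Fintype.card ↥(R \ A) = R.ncard - P'.card := by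
    rw [← Nat.card_eq_fintype_card, Nat.card_coe_set_eq,
      Set.ncard_diff hAR hAfin, ← hcol]
  have hk : P'.card ≤ R.ncard := by
    rw [← hcol]; exact Set.ncard_le_ncard hAR hRfin
  calc (DisjGraph (↑(P \ P') : Set (ℝ × ℝ))).chromaticNumber + (P'.card : ℕ∞)
      ≤ ((R.ncard - P'.card : ℕ) : ℕ∞) + (P'.card : ℕ∞) := by
        exact add_le_add_left (hcard ▸ hchi) _
    _ = ((R.ncard - P'.card + P'.card : ℕ) : ℕ∞) := by push_cast; ring
    _ = (R.ncard : ℕ∞) := by rw [Nat.sub_add_cancel hk]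
end

section
/- Every set of 5 points in general position in the plane contains 4 points in convex position. -/
open scoped Classical

def Dt (a b c : ℝ × ℝ) : ℝ := (b.1 - a.1) * (c.2 - a.2) - (b.2 - a.2) * (c.1 - a.1)

lemma collinear_of_Dt_zero {a b c : ℝ × ℝ} (h : Dt a b c = 0) :
    Collinear ℝ ({a, b, c} : Set (ℝ × ℝ)) := by
  by_cases hab : a = b
  · subst hab
    have : ({a, a, c} : Set (ℝ × ℝ)) = {a, c} := by simp
    rw [this]; exact collinear_pair ℝ a c
  · rw [collinear_iff_of_mem (show a ∈ ({a,b,c} : Set (ℝ×ℝ)) by simp)]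
    refine ⟨b - a, ?_⟩
    intro p hp
    rcases hp with rfl | rfl | hp
    · exact ⟨0, by simp⟩
    · exact ⟨1, by simp⟩
    · have hpc : p = c := hp
      subst hpc
      unfold Dt at h
      by_cases h1 : b.1 - a.1 ≠ 0
      · set r : ℝ := (p.1 - a.1) / (b.1 - a.1) with hr
        refine ⟨r, ?_⟩
        have e1 : (r • (b - a) + a).1 = r * (b.1 - a.1) + a.1 := by simp
        have e2 : (r • (b - a) + a).2 = r * (b.2 - a.2) + a.2 := by simp
        apply Prod.ext
        all_goals simp only [vadd_eq_add]
        · rw [e1, hr]; field_simp; ring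
        · rw [e2, hr]; field_simp; nlinarith [h]
      · push_neg at h1
        have h2 : b.2 - a.2 ≠ 0 := by
          intro h2
          exact hab (Prod.ext (by linarith) (by linarith)).symm
        set r : ℝ := (p.2 - a.2) / (b.2 - a.2) with hr
        refine ⟨r, ?_⟩
        have e1 : (r • (b - a) + a).1 = r * (b.1 - a.1) + a.1 := by simp
        have e2 : (r • (b - a) + a).2 = r * (b.2 - a.2) + a.2 := by simp
        apply Prod.ext
        all_goals simp only [vadd_eq_add]
        · rw [e1, hr]; field_simp; nlinarith [h]
        · rw [e2, hr]; field_simp; ring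

lemma key {a b c d : ℝ × ℝ} (h0 : Dt a b c ≠ 0) (h1 : Dt a b d ≠ 0)
    (h2 : Dt a c d ≠ 0) (h3 : Dt b c d ≠ 0)
    (hd : d ∈ convexHull ℝ ({a, b, c} : Set (ℝ × ℝ))) :
    Dt a b c * Dt a b d * Dt a c d * Dt b c d < 0 := by
  have hab : a ≠ b := by rintro rfl; apply h0; unfold Dt; ring
  have hac : a ≠ c := by rintro rfl; apply h0; unfold Dt; ring
  have hbc : b ≠ c := by rintro rfl; apply h0; unfold Dt; ring
  have hset : ({a, b, c} : Set (ℝ × ℝ)) = ↑({a, b, c} : Finset (ℝ × ℝ)) := by simp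
  rw [hset, Finset.convexHull_eq] at hd
  obtain ⟨w, hw, hsum, hcm⟩ := hd
  rw [Finset.sum_insert (by simp [hab, hac]), Finset.sum_insert (by simp [hbc]),
    Finset.sum_singleton] at hsum
  rw [Finset.centerMass] at hcm
  rw [Finset.sum_insert (by simp [hab, hac]), Finset.sum_insert (by simp [hbc]),
    Finset.sum_insert (by simp [hab, hac]), Finset.sum_insert (by simp [hbc]),
    Finset.sum_singleton, Finset.sum_singleton, hsum] at hcm
  simp only [id] at hcm
  set α := w a
  set β := w b
  set γ := w c
  have hα : 0 ≤ α := hw a (by simp)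
  have hβ : 0 ≤ β := hw b (by simp)
  have hγ : 0 ≤ γ := hw c (by simp)
  have hd1 : d.1 = α * a.1 + β * b.1 + γ * c.1 := by
    rw [← hcm]; simp; ring
  have hd2 : d.2 = α * a.2 + β * b.2 + γ * c.2 := by
    rw [← hcm]; simp; ring
  have e1 : Dt a b d = γ * Dt a b c := by
    unfold Dt; rw [hd1, hd2]
    have : γ = 1 - α - β := by linarith
    rw [this]; ring
  have e2 : Dt a c d = -β * Dt a b c := by
    unfold Dt; rw [hd1, hd2]
    have : β = 1 - α - γ := by linarith
    rw [this]; ring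
  have e3 : Dt b c d = α * Dt a b c := by
    unfold Dt; rw [hd1, hd2]
    have : α = 1 - β - γ := by linarith
    rw [this]; ring
  have hα' : 0 < α := lt_of_le_of_ne hα (by intro h'; apply h3; rw [e3, ← h']; ring)
  have hβ' : 0 < β := lt_of_le_of_ne hβ (by intro h'; apply h2; rw [e2, ← h']; ring)
  have hγ' : 0 < γ := lt_of_le_of_ne hγ (by intro h'; apply h1; rw [e1, ← h']; ring)
  have hD4 : 0 < Dt a b c ^ 4 := by positivity
  have heq : Dt a b c * Dt a b d * Dt a c d * Dt b c d = -(α * β * γ) * Dt a b c ^ 4 := by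
    rw [e1, e2, e3]; ring
  rw [heq]
  have : 0 < α * β * γ := by positivity
  nlinarith

lemma key4 {a b c d : ℝ × ℝ} (h0 : Dt a b c ≠ 0) (h1 : Dt a b d ≠ 0)
    (h2 : Dt a c d ≠ 0) (h3 : Dt b c d ≠ 0)
    (h : ¬ ConvexPos (↑({a, b, c, d} : Finset (ℝ × ℝ)))) :
    Dt a b c * Dt a b d * Dt a c d * Dt b c d < 0 := by
  unfold ConvexPos at h
  push_neg at h
  obtain ⟨p, hp, hin⟩ := h
  have hp' : p = a ∨ p = b ∨ p = c ∨ p = d := by simpa using hp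
  rcases hp' with rfl | rfl | rfl | rfl
  · have hin' : p ∈ convexHull ℝ ({b, c, d} : Set (ℝ × ℝ)) := by
      refine convexHull_mono ?_ hin
      intro x hx
      simp only [Set.mem_diff, Finset.coe_insert, Set.mem_insert_iff,
        Finset.coe_singleton, Set.mem_singleton_iff] at hx ⊢
      tauto
    have k := key (a := b) (b := c) (c := d) (d := p) h3
      (by rw [show Dt b c p = Dt p b c from by unfold Dt; ring]; exact h0)
      (by rw [show Dt b d p = Dt p b d from by unfold Dt; ring]; exact h1)
      (by rw [show Dt c d p = Dt p c d from by unfold Dt; ring]; exact h2) hin'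
    nlinarith [show Dt b c d * Dt b c p * Dt b d p * Dt c d p
        = Dt p b c * Dt p b d * Dt p c d * Dt b c d from by unfold Dt; ring]
  · have hin' : p ∈ convexHull ℝ ({a, c, d} : Set (ℝ × ℝ)) := by
      refine convexHull_mono ?_ hin
      intro x hx
      simp only [Set.mem_diff, Finset.coe_insert, Set.mem_insert_iff,
        Finset.coe_singleton, Set.mem_singleton_iff] at hx ⊢
      tauto
    have k := key (a := a) (b := c) (c := d) (d := p) h2
      (by rw [show Dt a c p = -Dt a p c from by unfold Dt; ring]; simpa using h0)
      (by rw [show Dt a d p = -Dt a p d from by unfold Dt; ring]; simpa using h1)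
      (by rw [show Dt c d p = Dt p c d from by unfold Dt; ring]; exact h3) hin'
    nlinarith [show Dt a c d * Dt a c p * Dt a d p * Dt c d p
        = Dt a p c * Dt a p d * Dt a c d * Dt p c d from by unfold Dt; ring]
  · have hin' : p ∈ convexHull ℝ ({a, b, d} : Set (ℝ × ℝ)) := by
      refine convexHull_mono ?_ hin
      intro x hx
      simp only [Set.mem_diff, Finset.coe_insert, Set.mem_insert_iff,
        Finset.coe_singleton, Set.mem_singleton_iff] at hx ⊢
      tauto
    have k := key (a := a) (b := b) (c := d) (d := p) h1 h0
      (by rw [show Dt a d p = -Dt a p d from by unfold Dt; ring]; simpa using h2)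
      (by rw [show Dt b d p = -Dt b p d from by unfold Dt; ring]; simpa using h3) hin'
    nlinarith [show Dt a b d * Dt a b p * Dt a d p * Dt b d p
        = Dt a b d * Dt a b p * Dt a p d * Dt b p d from by unfold Dt; ring,
      show Dt a p d * Dt b p d = Dt a d p * Dt b d p from by unfold Dt; ring]
  · have hin' : p ∈ convexHull ℝ ({a, b, c} : Set (ℝ × ℝ)) := by
      refine convexHull_mono ?_ hin
      intro x hx
      simp only [Set.mem_diff, Finset.coe_insert, Set.mem_insert_iff,
        Finset.coe_singleton, Set.mem_singleton_iff] at hx ⊢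
      tauto
    exact key h0 h1 h2 h3 hin'

set_option maxHeartbeats 1000000 in
theorem stmt6 (P : Finset (ℝ × ℝ)) (hcard : P.card = 5) (hgp : GenPos ↑P) :
    ∃ Q ⊆ P, Q.card = 4 ∧ ConvexPos ↑Q := by
  have hD : ∀ x ∈ P, ∀ y ∈ P, ∀ z ∈ P, x ≠ y → x ≠ z → y ≠ z → Dt x y z ≠ 0 := by
    intro x hx y hy z hz hxy hxz hyz h0
    exact hgp x (by exact_mod_cast hx) y (by exact_mod_cast hy) z (by exact_mod_cast hz)
      hxy hxz hyz (collinear_of_Dt_zero h0)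
  rw [show (5 : ℕ) = 4 + 1 from rfl, Finset.card_eq_succ] at hcard
  obtain ⟨a, P4, ha4, rfl, h4⟩ := hcard
  rw [show (4 : ℕ) = 3 + 1 from rfl, Finset.card_eq_succ] at h4
  obtain ⟨b, P3, hb3, rfl, h3⟩ := h4
  obtain ⟨c, d, e, hcd, hce, hde, rfl⟩ := Finset.card_eq_three.mp h3
  obtain ⟨hab, hac, had, hae⟩ : a ≠ b ∧ a ≠ c ∧ a ≠ d ∧ a ≠ e := by
    simpa using ha4
  obtain ⟨hbc, hbd, hbe⟩ : b ≠ c ∧ b ≠ d ∧ b ≠ e := by simpa using hb3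
  by_contra hcon
  push_neg at hcon
  have ma : a ∈ insert a (insert b ({c, d, e} : Finset (ℝ × ℝ))) := by simp
  have mb : b ∈ insert a (insert b ({c, d, e} : Finset (ℝ × ℝ))) := by simp
  have mc : c ∈ insert a (insert b ({c, d, e} : Finset (ℝ × ℝ))) := by simp
  have md : d ∈ insert a (insert b ({c, d, e} : Finset (ℝ × ℝ))) := by simp
  have me : e ∈ insert a (insert b ({c, d, e} : Finset (ℝ × ℝ))) := by simp
  have Dabc := hD a ma b mb c mc hab hac hbc
  have Dabd := hD a ma b mb d md hab had hbd
  have Dabe := hD a ma b mb e me hab hae hbe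
  have Dacd := hD a ma c mc d md hac had hcd
  have Dace := hD a ma c mc e me hac hae hce
  have Dade := hD a ma d md e me had hae hde
  have Dbcd := hD b mb c mc d md hbc hbd hcd
  have Dbce := hD b mb c mc e me hbc hbe hce
  have Dbde := hD b mb d md e me hbd hbe hde
  have Dcde := hD c mc d md e me hcd hce hde
  -- the five 4-element subsets
  have sub1 : ({b, c, d, e} : Finset (ℝ × ℝ)) ⊆ insert a (insert b {c, d, e}) := by
    intro x hx; simp only [Finset.mem_insert, Finset.mem_singleton] at hx ⊢; rcases hx with h|h|h|h <;> simp [h]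
  have sub2 : ({a, c, d, e} : Finset (ℝ × ℝ)) ⊆ insert a (insert b {c, d, e}) := by
    intro x hx; simp only [Finset.mem_insert, Finset.mem_singleton] at hx ⊢; rcases hx with h|h|h|h <;> simp [h]
  have sub3 : ({a, b, d, e} : Finset (ℝ × ℝ)) ⊆ insert a (insert b {c, d, e}) := by
    intro x hx; simp only [Finset.mem_insert, Finset.mem_singleton] at hx ⊢; rcases hx with h|h|h|h <;> simp [h]
  have sub4 : ({a, b, c, e} : Finset (ℝ × ℝ)) ⊆ insert a (insert b {c, d, e}) := by
    intro x hx; simp only [Finset.mem_insert, Finset.mem_singleton] at hx ⊢; rcases hx with h|h|h|h <;> simp [h]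
  have sub5 : ({a, b, c, d} : Finset (ℝ × ℝ)) ⊆ insert a (insert b {c, d, e}) := by
    intro x hx; simp only [Finset.mem_insert, Finset.mem_singleton] at hx ⊢; rcases hx with h|h|h|h <;> simp [h]
  have c1 : ({b, c, d, e} : Finset (ℝ × ℝ)).card = 4 := by
    rw [Finset.card_insert_of_notMem (by simp [hbc, hbd, hbe]),
      Finset.card_insert_of_notMem (by simp [hcd, hce]),
      Finset.card_insert_of_notMem (by simp [hde]), Finset.card_singleton]
  have c2 : ({a, c, d, e} : Finset (ℝ × ℝ)).card = 4 := by
    rw [Finset.card_insert_of_notMem (by simp [hac, had, hae]),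
      Finset.card_insert_of_notMem (by simp [hcd, hce]),
      Finset.card_insert_of_notMem (by simp [hde]), Finset.card_singleton]
  have c3 : ({a, b, d, e} : Finset (ℝ × ℝ)).card = 4 := by
    rw [Finset.card_insert_of_notMem (by simp [hab, had, hae]),
      Finset.card_insert_of_notMem (by simp [hbd, hbe]),
      Finset.card_insert_of_notMem (by simp [hde]), Finset.card_singleton]
  have c4 : ({a, b, c, e} : Finset (ℝ × ℝ)).card = 4 := by
    rw [Finset.card_insert_of_notMem (by simp [hab, hac, hae]),
      Finset.card_insert_of_notMem (by simp [hbc, hbe]),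
      Finset.card_insert_of_notMem (by simp [hce]), Finset.card_singleton]
  have c5 : ({a, b, c, d} : Finset (ℝ × ℝ)).card = 4 := by
    rw [Finset.card_insert_of_notMem (by simp [hab, hac, had]),
      Finset.card_insert_of_notMem (by simp [hbc, hbd]),
      Finset.card_insert_of_notMem (by simp [hcd]), Finset.card_singleton]
  have n1 := key4 Dbcd Dbce Dbde Dcde (hcon _ sub1 c1)
  have n2 := key4 Dacd Dace Dade Dcde (hcon _ sub2 c2)
  have n3 := key4 Dabd Dabe Dade Dbde (hcon _ sub3 c3)
  have n4 := key4 Dabc Dabe Dace Dbce (hcon _ sub4 c4)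
  have n5 := key4 Dabc Dabd Dacd Dbcd (hcon _ sub5 c5)
  have p12 : 0 < (Dt b c d * Dt b c e * Dt b d e * Dt c d e) *
      (Dt a c d * Dt a c e * Dt a d e * Dt c d e) := mul_pos_of_neg_of_neg n1 n2
  have p123 := mul_neg_of_pos_of_neg p12 n3
  have p1234 := mul_pos_of_neg_of_neg p123 n4
  have p12345 := mul_neg_of_pos_of_neg p1234 n5
  nlinarith [sq_nonneg (Dt a b c * Dt a b d * Dt a b e * Dt a c d * Dt a c e *
    Dt a d e * Dt b c d * Dt b c e * Dt b d e * Dt c d e), p12345]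
end
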